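/- arXiv:2408.06269 — 2 statements merged into one kernel-verified Lean document; each statement's English description precedes it below -/
import Mathlib

section
/- Fix ξ > 0 and n ∈ ℕ with n > 2/ξ² - 1, and let η satisfy η₀(n) < η < η_max(n). Then the equation ℓ_n(r) = η has exactly two solutions r > 0, and denoting them r₁ < r₂ one has r₁ < r_max < r₂, where r_max = √(ξ²(n+1)/2 - 1). -/
open Real MeasureTheory Filter

/-- Isotropic Gaussian density on ℝⁿ: `π^{-n/2} ξ^{-n} exp(-‖y‖²/ξ²)`. -/
noncomputable def pG (ξ : ℝ) (n : ℕ) (y : EuclideanSpace ℝ (Fin n)) : ℝ :=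
  (π ^ ((n : ℝ) / 2) * ξ ^ n)⁻¹ * Real.exp (-‖y‖ ^ 2 / ξ ^ 2)

/-- Isotropic Cauchy density on ℝⁿ: `Γ((n+1)/2) π^{-(n+1)/2} (1+‖y‖²)^{-(n+1)/2}`. -/
noncomputable def pC (n : ℕ) (y : EuclideanSpace ℝ (Fin n)) : ℝ :=
  Real.Gamma (((n : ℝ) + 1) / 2) / π ^ (((n : ℝ) + 1) / 2) *
    (1 + ‖y‖ ^ 2) ^ (-(((n : ℝ) + 1) / 2))

/-- Likelihood ratio `ℓ_n(r) = (√π/(Γ((n+1)/2) ξⁿ)) e^{-r²/ξ²} (1+r²)^{(n+1)/2}`. -/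
noncomputable def ell (ξ : ℝ) (n : ℕ) (r : ℝ) : ℝ :=
  Real.sqrt π / (Real.Gamma (((n : ℝ) + 1) / 2) * ξ ^ n) *
    Real.exp (-r ^ 2 / ξ ^ 2) * (1 + r ^ 2) ^ (((n : ℝ) + 1) / 2)

/-- `η₀(n) = ℓ_n(0)`. -/
noncomputable def eta0 (ξ : ℝ) (n : ℕ) : ℝ := ell ξ n 0

/-- `η_max(n) = sup_{r ≥ 0} ℓ_n(r)`. -/
noncomputable def etaMax (ξ : ℝ) (n : ℕ) : ℝ := sSup (ell ξ n '' Set.Ici 0)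

/-- Miss probability: integral of the Cauchy density over the annulus `a ≤ ‖y‖ ≤ b`. -/
noncomputable def PM (n : ℕ) (a b : ℝ) : ℝ :=
  ∫ y in {y : EuclideanSpace ℝ (Fin n) | a ≤ ‖y‖ ∧ ‖y‖ ≤ b}, pC n y

/-- False-alarm probability: 1 minus the Gaussian mass of the annulus `a ≤ ‖y‖ ≤ b`. -/
noncomputable def PF (ξ : ℝ) (n : ℕ) (a b : ℝ) : ℝ :=
  1 - ∫ y in {y : EuclideanSpace ℝ (Fin n) | a ≤ ‖y‖ ∧ ‖y‖ ≤ b}, pG ξ n y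

/-- The Gaussian Q-function `Q(x) = ∫_x^∞ (2π)^{-1/2} e^{-t²/2} dt`. -/
noncomputable def Qfun (x : ℝ) : ℝ :=
  ∫ t in Set.Ici x, (Real.sqrt (2 * π))⁻¹ * Real.exp (-t ^ 2 / 2)

/-!
Write `ℓ_n(r) = η₀(n) · exp (h(r²))` with `h(t) = ((n+1)/2) log(1+t) - t/ξ²`. Since
`h'(t) = ((n+1)/2)/(1+t) - 1/ξ²` changes sign once, at `t = r_max²`, the ratio `ℓ_n` increases
strictly on `[0, r_max]`, decreases strictly on `[r_max, ∞)` and tends to `0`. Hence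
`η_max(n) = ℓ_n(r_max)`, and a level `η` strictly between `η₀(n) = ℓ_n(0) > 0` and this maximum is
attained exactly once on each side of `r_max`, by the intermediate value theorem.
-/

open Set Topology

section Unimodal

variable {f : ℝ → ℝ} {a m : ℝ}

theorem isGreatest_image_Ici_of_unimodal (ham : a ≤ m) (hmono : StrictMonoOn f (Icc a m))
    (hanti : StrictAntiOn f (Ici m)) : IsGreatest (f '' Ici a) (f m) := by
  refine ⟨⟨m, ham, rfl⟩, ?_⟩
  rintro _ ⟨r, hr, rfl⟩
  rcases le_total r m with h | h
  · exact hmono.monotoneOn ⟨hr, h⟩ ⟨ham, le_rfl⟩ h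
  · exact hanti.antitoneOn self_mem_Ici h h

theorem exists_two_eq_of_unimodal {η L : ℝ} (hf : ContinuousOn f (Ici a)) (ham : a ≤ m)
    (hmono : StrictMonoOn f (Icc a m)) (hanti : StrictAntiOn f (Ici m))
    (hlim : Tendsto f atTop (𝓝 L)) (hLη : L < η) (haη : f a < η)
    (hηsup : η < sSup (f '' Ici a)) :
    ∃ r₁ r₂, a < r₁ ∧ r₁ < m ∧ m < r₂ ∧ f r₁ = η ∧ f r₂ = η ∧
      ∀ r, a < r → f r = η → r = r₁ ∨ r = r₂ := by
  have hηm : η < f m :=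
    hηsup.trans_le (isGreatest_image_Ici_of_unimodal ham hmono hanti).csSup_eq.le
  obtain ⟨r₁, ⟨har₁, hr₁m⟩, hr₁⟩ :=
    intermediate_value_Ioo ham (hf.mono Icc_subset_Ici_self) ⟨haη, hηm⟩
  obtain ⟨M, hMη, hmM⟩ :=
    ((hlim.eventually (gt_mem_nhds hLη)).and (eventually_gt_atTop m)).exists
  obtain ⟨r₂, ⟨hmr₂, -⟩, hr₂⟩ := intermediate_value_Ioo' hmM.le
    (hf.mono (Icc_subset_Ici_self.trans (Ici_subset_Ici.2 ham))) ⟨hMη, hηm⟩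
  refine ⟨r₁, r₂, har₁, hr₁m, hmr₂, hr₁, hr₂, fun r har hr => ?_⟩
  rcases le_total r m with h | h
  · exact .inl (hmono.injOn ⟨har.le, h⟩ ⟨har₁.le, hr₁m.le⟩ (hr.trans hr₁.symm))
  · exact .inr (hanti.injOn h hmr₂.le (hr.trans hr₂.symm))

end Unimodal

noncomputable def logProfile (p c t : ℝ) : ℝ := p * log (1 + t) - t / c

section LogProfile

variable {p c : ℝ}

theorem hasDerivAt_logProfile {t : ℝ} (ht : -1 < t) :
    HasDerivAt (logProfile p c) (p / (1 + t) - 1 / c) t := by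
  have h := ((((hasDerivAt_id' t).const_add 1).log (by linarith)).const_mul p).sub
    ((hasDerivAt_id' t).div_const c)
  rw [show p / (1 + t) - 1 / c = p * (1 / (1 + t)) - 1 / c by ring]
  exact h

theorem continuousOn_logProfile : ContinuousOn (logProfile p c) (Ioi (-1)) := fun _ ht =>
  (hasDerivAt_logProfile ht).continuousAt.continuousWithinAt

theorem strictMonoOn_logProfile (hc : 0 < c) :
    StrictMonoOn (logProfile p c) (Ioc (-1) (c * p - 1)) := by
  refine strictMonoOn_of_deriv_pos (convex_Ioc _ _)
    (continuousOn_logProfile.mono Ioc_subset_Ioi_self) fun t ht => ?_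
  rw [interior_Ioc] at ht
  have h1 : 0 < 1 + t := by linarith [ht.1]
  rw [(hasDerivAt_logProfile ht.1).deriv, sub_pos, div_lt_div_iff₀ hc h1]
  linarith [ht.2]

theorem strictAntiOn_logProfile (hp : 0 < p) (hc : 0 < c) :
    StrictAntiOn (logProfile p c) (Ici (c * p - 1)) := by
  have hsub : Ici (c * p - 1) ⊆ Ioi (-1) := fun _ ht =>
    ((by linarith [mul_pos hc hp] : (-1 : ℝ) < c * p - 1).trans_le ht)
  refine strictAntiOn_of_deriv_neg (convex_Ici _) (continuousOn_logProfile.mono hsub)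
    fun t ht => ?_
  rw [interior_Ici] at ht
  have ht1 : -1 < t := hsub (mem_Ici_of_Ioi ht)
  have h1 : 0 < 1 + t := by linarith
  rw [(hasDerivAt_logProfile ht1).deriv, sub_neg, div_lt_div_iff₀ h1 hc]
  linarith [mem_Ioi.1 ht]

end LogProfile

theorem tendsto_exp_logProfile_atTop {p c : ℝ} (hc : 0 < c) :
    Tendsto (fun t => exp (logProfile p c t)) atTop (𝓝 0) := by
  -- for `t > -1`, `exp (logProfile p c t) = exp c⁻¹ * ((1 + t) ^ p * exp (-c⁻¹ * (1 + t)))`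
  have h := ((tendsto_rpow_mul_exp_neg_mul_atTop_nhds_zero p c⁻¹ (inv_pos.2 hc)).comp
    (tendsto_atTop_add_const_left _ 1 tendsto_id)).const_mul (exp c⁻¹)
  rw [mul_zero] at h
  refine h.congr' ((eventually_gt_atTop (-1)).mono fun t ht => ?_)
  simp only [Function.comp_apply, id, logProfile]
  rw [rpow_def_of_pos (by linarith), ← exp_add, ← exp_add]
  congr 1
  field_simp
  ring

section Ell

variable {ξ : ℝ} {n : ℕ}

theorem eta0_eq : eta0 ξ n = √π / (Gamma (((n : ℝ) + 1) / 2) * ξ ^ n) := by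
  simp [eta0, ell]

theorem eta0_pos (hξ : 0 < ξ) : 0 < eta0 ξ n := by
  have := Gamma_pos_of_pos (show 0 < ((n : ℝ) + 1) / 2 by positivity)
  rw [eta0_eq]
  positivity

theorem ell_eq_eta0_mul_exp (r : ℝ) :
    ell ξ n r = eta0 ξ n * exp (logProfile (((n : ℝ) + 1) / 2) (ξ ^ 2) (r ^ 2)) := by
  rw [eta0_eq, ell, rpow_def_of_pos (by positivity), mul_assoc, ← exp_add, logProfile]
  ring_nf

theorem continuous_ell : Continuous (ell ξ n) := by
  unfold ell
  fun_prop (disch := positivity)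

theorem tendsto_ell_atTop (hξ : ξ ≠ 0) : Tendsto (ell ξ n) atTop (𝓝 0) := by
  have h := ((tendsto_exp_logProfile_atTop (p := ((n : ℝ) + 1) / 2)
    (by positivity : 0 < ξ ^ 2)).comp (tendsto_pow_atTop two_ne_zero)).const_mul (eta0 ξ n)
  rw [mul_zero] at h
  exact h.congr fun r => (ell_eq_eta0_mul_exp r).symm

theorem strictMonoOn_ell (hξ : 0 < ξ) :
    StrictMonoOn (ell ξ n) (Icc 0 √(ξ ^ 2 * ((n : ℝ) + 1) / 2 - 1)) := by
  rcases le_or_gt (ξ ^ 2 * ((n : ℝ) + 1) / 2 - 1) 0 with hy | hy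
  · exact (subsingleton_Icc_of_ge (sqrt_eq_zero'.2 hy).le).strictMonoOn (f := ell ξ n)
  have hmem : ∀ r ∈ Icc 0 √(ξ ^ 2 * ((n : ℝ) + 1) / 2 - 1),
      r ^ 2 ∈ Ioc (-1) (ξ ^ 2 * (((n : ℝ) + 1) / 2) - 1) := fun r hr =>
    ⟨by nlinarith, by linarith [(le_sqrt hr.1 hy.le).1 hr.2]⟩
  intro a ha b hb hab
  rw [ell_eq_eta0_mul_exp, ell_eq_eta0_mul_exp]
  exact mul_lt_mul_of_pos_left (exp_lt_exp.2 (strictMonoOn_logProfile (by positivity)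
    (hmem a ha) (hmem b hb) (pow_lt_pow_left₀ hab ha.1 two_ne_zero))) (eta0_pos hξ)

theorem strictAntiOn_ell (hξ : 0 < ξ) :
    StrictAntiOn (ell ξ n) (Ici √(ξ ^ 2 * ((n : ℝ) + 1) / 2 - 1)) := by
  have hmem : ∀ r ∈ Ici √(ξ ^ 2 * ((n : ℝ) + 1) / 2 - 1),
      r ^ 2 ∈ Ici (ξ ^ 2 * (((n : ℝ) + 1) / 2) - 1) := fun r hr =>
    mem_Ici.2 (by linarith [(sqrt_le_iff.1 hr).2])
  intro a ha b hb hab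
  rw [ell_eq_eta0_mul_exp, ell_eq_eta0_mul_exp]
  exact mul_lt_mul_of_pos_left (exp_lt_exp.2 (strictAntiOn_logProfile (by positivity)
    (by positivity) (hmem a ha) (hmem b hb)
    (pow_lt_pow_left₀ hab ((sqrt_nonneg _).trans ha) two_ne_zero))) (eta0_pos hξ)

end Ell

theorem likelihood_ratio_two_solutions_general
    (ξ : ℝ) (n : ℕ) (hξ : 0 < ξ)
    (η : ℝ) (h0 : eta0 ξ n < η) (hmax : η < etaMax ξ n) :
    ∃ r₁ r₂ : ℝ, 0 < r₁ ∧
      r₁ < Real.sqrt (ξ ^ 2 * ((n : ℝ) + 1) / 2 - 1) ∧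
      Real.sqrt (ξ ^ 2 * ((n : ℝ) + 1) / 2 - 1) < r₂ ∧
      ell ξ n r₁ = η ∧ ell ξ n r₂ = η ∧
      ∀ r : ℝ, 0 < r → ell ξ n r = η → r = r₁ ∨ r = r₂ :=
  exists_two_eq_of_unimodal continuous_ell.continuousOn (sqrt_nonneg _) (strictMonoOn_ell hξ)
    (strictAntiOn_ell hξ) (tendsto_ell_atTop hξ.ne') ((eta0_pos hξ).trans h0) h0 hmax

/-- For `n > 2/ξ² - 1` and `η₀(n) < η < η_max(n)`, the equation
`ℓ_n(r) = η` has exactly two positive solutions `r₁ < r_max < r₂`. -/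
theorem likelihood_ratio_two_solutions
    (ξ : ℝ) (n : ℕ) (hξ : 0 < ξ) (hn : 2 / ξ ^ 2 - 1 < (n : ℝ))
    (η : ℝ) (h0 : eta0 ξ n < η) (hmax : η < etaMax ξ n) :
    ∃ r₁ r₂ : ℝ, 0 < r₁ ∧
      r₁ < Real.sqrt (ξ ^ 2 * ((n : ℝ) + 1) / 2 - 1) ∧
      Real.sqrt (ξ ^ 2 * ((n : ℝ) + 1) / 2 - 1) < r₂ ∧
      ell ξ n r₁ = η ∧ ell ξ n r₂ = η ∧
      ∀ r : ℝ, 0 < r → ell ξ n r = η → r = r₁ ∨ r = r₂ :=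
  likelihood_ratio_two_solutions_general ξ n hξ η h0 hmax
end

section
/- Fix ξ > 0 and let (η_n) be a sequence of thresholds with η₀(n) < η_n < η_max(n) for all large n and such that (η_n/η_max(n))^{2/(n+1)} → 1 as n → ∞. Then the miss probability P_M(n, r₁(n,η_n), r₂(n,η_n)) is asymptotically equivalent, as n → ∞, to (1/√π) · (Γ((n+1)/2)/Γ(n/2)) · √(2/(n+1)) · ∫_{(n+1)/(2 r₂(n,η_n)²)}^{(n+1)/(2 r₁(n,η_n)²)} t^{-1/2} e^{-t} dt. -/
/-!
Write `p = (n+1)/2`. In polar coordinates the miss probability is a constant times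
`∫_{r₁}^{r₂} (1 + r⁻²)^{-p} r⁻² dr`, and the substitution `t = p/r²` turns the incomplete gamma
integral into the same constant times `∫_{r₁}^{r₂} e^{-p/r²} r⁻² dr`. Since
`u - u² ≤ log (1 + u) ≤ u`, the ratio of the two integrands lies in `[1, e^{p/r₁⁴}]`.
On the other hand `ℓ_n(r)/η_max(n) = (s e^{1-s})^p` with `s = (1 + r²)/(p ξ²)`, so the regime
hypothesis keeps `s` away from `0` at `r = r₁`; hence `r₁² ≳ n` and `p/r₁⁴ → 0`.
-/

open Real MeasureTheory Filter

open Set Metric Module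

lemma ell_pos {ξ : ℝ} (hξ : 0 < ξ) (n : ℕ) (r : ℝ) : 0 < ell ξ n r := by
  have := Gamma_pos_of_pos (by positivity : (0 : ℝ) < ((n : ℝ) + 1) / 2)
  unfold ell
  positivity

lemma ell_eq_ell_peak_mul {ξ : ℝ} (hξ : 0 < ξ) {n : ℕ} (hM : 1 ≤ ((n : ℝ) + 1) * ξ ^ 2 / 2)
    (r : ℝ) :
    ell ξ n r = ell ξ n √(((n : ℝ) + 1) * ξ ^ 2 / 2 - 1) *
      ((1 + r ^ 2) / (((n : ℝ) + 1) * ξ ^ 2 / 2) *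
        exp (1 - (1 + r ^ 2) / (((n : ℝ) + 1) * ξ ^ 2 / 2))) ^ (((n : ℝ) + 1) / 2) := by
  set M := ((n : ℝ) + 1) * ξ ^ 2 / 2
  set s := (1 + r ^ 2) / M
  have hM0 : 0 < M := by positivity
  have hs : 0 ≤ s := by positivity
  have hpow : (1 + r ^ 2) ^ (((n : ℝ) + 1) / 2) =
      M ^ (((n : ℝ) + 1) / 2) * s ^ (((n : ℝ) + 1) / 2) := by
    rw [← mul_rpow hM0.le hs, mul_div_cancel₀ _ hM0.ne']
  have hexp : exp (-r ^ 2 / ξ ^ 2) =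
      exp (-(M - 1) / ξ ^ 2) * exp ((1 - s) * (((n : ℝ) + 1) / 2)) := by
    rw [← exp_add]
    congr 1
    simp only [s, M]
    field_simp
    ring
  rw [ell, ell, sq_sqrt (by linarith), add_sub_cancel, mul_rpow hs (exp_pos _).le, ← exp_mul,
    hpow, hexp]
  ring

lemma mul_exp_one_sub_le_one (s : ℝ) : s * exp (1 - s) ≤ 1 := by
  calc s * exp (1 - s) ≤ exp (s - 1) * exp (1 - s) := by
        gcongr ?_ * _
        linarith [add_one_le_exp (s - 1)]
    _ = 1 := by rw [← exp_add, sub_add_sub_cancel, sub_self, exp_zero]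

lemma etaMax_eq_ell_peak {ξ : ℝ} (hξ : 0 < ξ) {n : ℕ} (hM : 1 ≤ ((n : ℝ) + 1) * ξ ^ 2 / 2) :
    etaMax ξ n = ell ξ n √(((n : ℝ) + 1) * ξ ^ 2 / 2 - 1) := by
  refine IsGreatest.csSup_eq ⟨⟨_, sqrt_nonneg _, rfl⟩, ?_⟩
  rintro _ ⟨r, -, rfl⟩
  rw [ell_eq_ell_peak_mul hξ hM r]
  exact mul_le_of_le_one_right (ell_pos hξ n _).le
    (rpow_le_one (by positivity) (mul_exp_one_sub_le_one _) (by positivity))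

lemma ell_div_etaMax_rpow {ξ : ℝ} (hξ : 0 < ξ) {n : ℕ} (hM : 1 ≤ ((n : ℝ) + 1) * ξ ^ 2 / 2)
    (r : ℝ) :
    (ell ξ n r / etaMax ξ n) ^ (2 / ((n : ℝ) + 1)) =
      (1 + r ^ 2) / (((n : ℝ) + 1) * ξ ^ 2 / 2) *
        exp (1 - (1 + r ^ 2) / (((n : ℝ) + 1) * ξ ^ 2 / 2)) := by
  rw [etaMax_eq_ell_peak hξ hM, ell_eq_ell_peak_mul hξ hM r,
    mul_div_cancel_left₀ _ (ell_pos hξ n _).ne', ← inv_div (((n : ℝ) + 1)),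
    rpow_rpow_inv (by positivity) (by positivity)]

lemma quarter_lt_of_exp_one_div_four_lt {s : ℝ} (hs : 0 ≤ s)
    (h : exp 1 / 4 < s * exp (1 - s)) : 1 / 4 < s := by
  by_contra! hle
  have : s * exp (1 - s) ≤ 1 / 4 * exp 1 :=
    mul_le_mul hle (exp_le_exp.2 (by linarith)) (exp_pos _).le (by norm_num)
  linarith

lemma eventually_lt_one_add_sq_of_tendsto {ξ : ℝ} (hξ : 0 < ξ) {r : ℕ → ℝ}
    (hr : Tendsto (fun n : ℕ => (ell ξ n (r n) / etaMax ξ n) ^ (2 / ((n : ℝ) + 1))) atTop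
      (nhds 1)) :
    ∀ᶠ n : ℕ in atTop, ξ ^ 2 / 8 * ((n : ℝ) + 1) < 1 + r n ^ 2 := by
  have hM : ∀ᶠ n : ℕ in atTop, 1 ≤ ((n : ℝ) + 1) * ξ ^ 2 / 2 :=
    (((tendsto_atTop_add_const_right _ 1 tendsto_natCast_atTop_atTop).atTop_mul_const
      (by positivity)).atTop_div_const two_pos).eventually_ge_atTop 1
  have hlt := hr.eventually (lt_mem_nhds (show exp 1 / 4 < 1 by linarith [exp_one_lt_d9]))
  filter_upwards [hM, hlt] with n hMn hn
  rw [ell_div_etaMax_rpow hξ hMn] at hn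
  have := quarter_lt_of_exp_one_div_four_lt (by positivity) hn
  rw [lt_div_iff₀ (by positivity)] at this
  linarith

lemma tendsto_mul_inv_sq_sq_of_linear_lt {x : ℕ → ℝ} {c : ℝ} (hc : 0 < c)
    (hx : ∀ᶠ n : ℕ in atTop, c * ((n : ℝ) + 1) < 1 + x n) :
    Tendsto (fun n : ℕ => ((n : ℝ) + 1) / 2 * ((x n)⁻¹) ^ 2) atTop (nhds 0) := by
  have hbig : ∀ᶠ n : ℕ in atTop, 2 ≤ c * ((n : ℝ) + 1) :=
    ((tendsto_atTop_add_const_right _ 1 tendsto_natCast_atTop_atTop).const_mul_atTop hc)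
      |>.eventually_ge_atTop 2
  have hbound : ∀ᶠ n : ℕ in atTop,
      ((n : ℝ) + 1) / 2 * ((x n)⁻¹) ^ 2 ≤ 2 / c ^ 2 * (1 / ((n : ℝ) + 1)) := by
    filter_upwards [hx, hbig] with n hxn hbn
    have hhalf : c * ((n : ℝ) + 1) / 2 ≤ x n := by linarith
    have hinv : (x n)⁻¹ ≤ 2 / (c * ((n : ℝ) + 1)) := by
      rw [← inv_div]; exact inv_anti₀ (by positivity) hhalf
    calc ((n : ℝ) + 1) / 2 * ((x n)⁻¹) ^ 2
        ≤ ((n : ℝ) + 1) / 2 * (2 / (c * ((n : ℝ) + 1))) ^ 2 := by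
          gcongr
          exact inv_nonneg.2 (by linarith)
      _ = 2 / c ^ 2 * (1 / ((n : ℝ) + 1)) := by field_simp
  refine squeeze_zero' (Eventually.of_forall fun n => by positivity) hbound ?_
  simpa only [mul_zero] using
    (tendsto_one_div_add_atTop_nhds_zero_nat (𝕜 := ℝ)).const_mul (2 / c ^ 2)

lemma setIntegral_annulus_fun_norm {E F : Type*} [NormedAddCommGroup E] [NormedSpace ℝ E]
    [Nontrivial E] [FiniteDimensional ℝ E] [MeasurableSpace E] [BorelSpace E]
    [NormedAddCommGroup F] [NormedSpace ℝ F] (μ : Measure E) [μ.IsAddHaarMeasure] (f : ℝ → F)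
    {a b : ℝ} (ha : 0 < a) (hab : a ≤ b) :
    ∫ x in {x : E | a ≤ ‖x‖ ∧ ‖x‖ ≤ b}, f ‖x‖ ∂μ =
      (finrank ℝ E * μ.real (ball 0 1)) • ∫ r in a..b, r ^ (finrank ℝ E - 1) • f r := by
  have hmeas : MeasurableSet {x : E | a ≤ ‖x‖ ∧ ‖x‖ ≤ b} :=
    measurableSet_Icc.preimage continuous_norm.measurable
  have hIcc : Icc a b ∩ Ioi 0 = Icc a b := inter_eq_left.2 fun x hx => ha.trans_le hx.1
  rw [← integral_indicator hmeas,
    show ({x : E | a ≤ ‖x‖ ∧ ‖x‖ ≤ b}.indicator fun x => f ‖x‖) =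
      fun x => (Icc a b).indicator f ‖x‖ from rfl,
    integral_fun_norm_addHaar, ← indicator_smul, integral_indicator measurableSet_Icc,
    Measure.restrict_restrict measurableSet_Icc, hIcc, integral_Icc_eq_integral_Ioc,
    ← intervalIntegral.integral_of_le hab, mul_smul, Nat.cast_smul_eq_nsmul]

lemma natCast_mul_volume_real_ball_zero_one {n : ℕ} (hn : 1 ≤ n) :
    n * volume.real (ball (0 : EuclideanSpace ℝ (Fin n)) 1) = 2 * √π ^ n / Gamma (n / 2) := by
  have : Nonempty (Fin n) := ⟨⟨0, hn⟩⟩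
  rw [measureReal_def, EuclideanSpace.volume_ball, Fintype.card_fin, ENNReal.ofReal_one, one_pow,
    one_mul, ENNReal.toReal_ofReal (by positivity), Gamma_add_one (by positivity)]
  field_simp

noncomputable def cauchyProfile (p r : ℝ) : ℝ := (1 + (r ^ 2)⁻¹) ^ (-p) / r ^ 2

noncomputable def gammaProfile (p r : ℝ) : ℝ := exp (-(p * (r ^ 2)⁻¹)) / r ^ 2

lemma pow_mul_one_add_sq_rpow_eq_cauchyProfile {n : ℕ} (hn : 1 ≤ n) {r : ℝ} (hr : 0 < r) :
    r ^ (n - 1) * (1 + r ^ 2) ^ (-(((n : ℝ) + 1) / 2)) = cauchyProfile (((n : ℝ) + 1) / 2) r := by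
  have hr2 : 0 < r ^ 2 := by positivity
  have hsplit : 1 + (r ^ 2)⁻¹ = (1 + r ^ 2) * (r ^ 2)⁻¹ := by field_simp; ring
  have hpow : (r ^ 2) ^ (((n : ℝ) + 1) / 2) = r ^ (n - 1) * r ^ 2 := by
    rw [← pow_add, show n - 1 + 2 = n + 1 by omega, ← rpow_natCast_mul hr.le, ← rpow_natCast]
    push_cast
    ring_nf
  rw [cauchyProfile, hsplit, mul_rpow (by positivity) (by positivity), inv_rpow hr2.le,
    rpow_neg hr2.le, inv_inv, hpow]
  field_simp

lemma integral_comp_div_sq {g : ℝ → ℝ} (hg : ContinuousOn g (Ioi 0)) {p a b : ℝ} (hp : 0 < p)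
    (ha : 0 < a) (hb : 0 < b) :
    ∫ t in p / b ^ 2..p / a ^ 2, g t = ∫ r in a..b, 2 * p / r ^ 3 * g (p / r ^ 2) := by
  have hpos : ∀ r ∈ uIcc a b, 0 < r := fun r hr => lt_min ha hb |>.trans_le hr.1
  have hderiv : ∀ r ∈ uIcc a b, HasDerivAt (fun r => p / r ^ 2) (-(2 * p / r ^ 3)) r := by
    intro r hr
    have hr0 := (hpos r hr).ne'
    exact ((hasDerivAt_const r p).div (hasDerivAt_pow 2 r) (pow_ne_zero 2 hr0)).congr_deriv
      (by field_simp; ring)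
  have hcont : ContinuousOn (fun r => -(2 * p / r ^ 3)) (uIcc a b) :=
    (continuousOn_const.div (continuousOn_pow 3) fun r hr => pow_ne_zero 3 (hpos r hr).ne').neg
  have hg' : ContinuousOn g ((fun r => p / r ^ 2) '' uIcc a b) :=
    hg.mono <| image_subset_iff.2 fun r hr => div_pos hp (pow_pos (hpos r hr) 2)
  rw [intervalIntegral.integral_symm, ← intervalIntegral.integral_comp_mul_deriv' hderiv hcont hg',
    ← intervalIntegral.integral_neg]
  congr 1
  ext r
  simp only [Function.comp_apply]
  ring

lemma integral_rpow_neg_half_mul_exp_neg {p a b : ℝ} (hp : 0 < p) (ha : 0 < a) (hab : a ≤ b) :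
    ∫ t in p / b ^ 2..p / a ^ 2, t ^ (-(1 : ℝ) / 2) * exp (-t) =
      2 * √p * ∫ r in a..b, gammaProfile p r := by
  have hg : ContinuousOn (fun t : ℝ => t ^ (-(1 : ℝ) / 2) * exp (-t)) (Ioi 0) :=
    (continuousOn_id.rpow_const fun t ht => Or.inl (ne_of_gt ht)).mul (by fun_prop)
  rw [integral_comp_div_sq hg hp ha (ha.trans_le hab), ← intervalIntegral.integral_const_mul]
  refine intervalIntegral.integral_congr fun r hr => ?_
  have hr : 0 < r := lt_min ha (ha.trans_le hab) |>.trans_le hr.1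
  have hsqrt : (p / r ^ 2) ^ (-(1 : ℝ) / 2) = r / √p := by
    rw [neg_div, rpow_neg (by positivity), ← sqrt_eq_rpow, sqrt_div' _ (by positivity),
      sqrt_sq hr.le, inv_div]
  rw [hsqrt, gammaProfile, ← div_eq_mul_inv]
  field_simp
  exact (sq_sqrt hp.le).symm

lemma exp_neg_mul_le_one_add_rpow_neg {p u : ℝ} (hp : 0 ≤ p) (hu : 0 ≤ u) :
    exp (-(p * u)) ≤ (1 + u) ^ (-p) := by
  have hlog : log (1 + u) ≤ u := by linarith [log_le_sub_one_of_pos (by positivity : 0 < 1 + u)]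
  rw [rpow_def_of_pos (by positivity), exp_le_exp]
  nlinarith

lemma one_add_rpow_neg_le_exp_mul {p u : ℝ} (hp : 0 ≤ p) (hu : 0 ≤ u) :
    (1 + u) ^ (-p) ≤ exp (p * u ^ 2) * exp (-(p * u)) := by
  have hinv : u - u ^ 2 ≤ 1 - (1 + u)⁻¹ := by
    rw [show 1 - (1 + u)⁻¹ = u / (1 + u) by field_simp; ring, le_div_iff₀ (by positivity)]
    nlinarith [pow_nonneg hu 3]
  have hlog : u - u ^ 2 ≤ log (1 + u) := hinv.trans (one_sub_inv_le_log_of_pos (by positivity))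
  rw [rpow_def_of_pos (by positivity), ← exp_add, exp_le_exp]
  nlinarith

lemma continuousOn_cauchyProfile (p : ℝ) : ContinuousOn (cauchyProfile p) (Ioi 0) := by
  refine fun r (hr : 0 < r) => ContinuousAt.continuousWithinAt ?_
  unfold cauchyProfile
  fun_prop (disch := first | positivity | exact Or.inl (by positivity))

lemma continuousOn_gammaProfile (p : ℝ) : ContinuousOn (gammaProfile p) (Ioi 0) := by
  refine fun r (hr : 0 < r) => ContinuousAt.continuousWithinAt ?_
  unfold gammaProfile
  fun_prop (disch := positivity)

section ProfileIntegrals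

variable {p a b : ℝ}

lemma intervalIntegrable_cauchyProfile (ha : 0 < a) (hab : a ≤ b) :
    IntervalIntegrable (cauchyProfile p) volume a b :=
  ((continuousOn_cauchyProfile p).mono fun _ hr => ha.trans_le (uIcc_of_le hab ▸ hr).1)
    |>.intervalIntegrable

lemma intervalIntegrable_gammaProfile (ha : 0 < a) (hab : a ≤ b) :
    IntervalIntegrable (gammaProfile p) volume a b :=
  ((continuousOn_gammaProfile p).mono fun _ hr => ha.trans_le (uIcc_of_le hab ▸ hr).1)
    |>.intervalIntegrable

lemma integral_gammaProfile_pos (ha : 0 < a) (hab : a < b) :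
    0 < ∫ r in a..b, gammaProfile p r :=
  intervalIntegral.intervalIntegral_pos_of_pos_on (intervalIntegrable_gammaProfile ha hab.le)
    (fun _ hr => div_pos (exp_pos _) (pow_pos (ha.trans hr.1) 2)) hab

lemma integral_cauchyProfile_div_integral_gammaProfile_mem_Icc (hp : 0 ≤ p) (ha : 0 < a)
    (hab : a < b) :
    (∫ r in a..b, cauchyProfile p r) / (∫ r in a..b, gammaProfile p r) ∈
      Icc 1 (exp (p * ((a ^ 2)⁻¹) ^ 2)) := by
  have hG := integral_gammaProfile_pos (p := p) ha hab
  have hCi := intervalIntegrable_cauchyProfile (p := p) ha hab.le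
  have hGi := intervalIntegrable_gammaProfile (p := p) ha hab.le
  rw [mem_Icc, one_le_div hG, div_le_iff₀ hG, ← intervalIntegral.integral_const_mul]
  constructor
  · refine intervalIntegral.integral_mono_on hab.le hGi hCi fun _ _ => ?_
    exact div_le_div_of_nonneg_right
      (exp_neg_mul_le_one_add_rpow_neg hp (by positivity)) (by positivity)
  · refine intervalIntegral.integral_mono_on hab.le hCi (hGi.const_mul _) fun r hr => ?_
    have hr0 : 0 < r := ha.trans_le hr.1
    have hinv : (r ^ 2)⁻¹ ≤ (a ^ 2)⁻¹ := inv_anti₀ (by positivity) (by gcongr; exact hr.1)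
    calc cauchyProfile p r ≤ exp (p * ((r ^ 2)⁻¹) ^ 2) * gammaProfile p r := by
          rw [gammaProfile, mul_div_assoc']
          exact div_le_div_of_nonneg_right
            (one_add_rpow_neg_le_exp_mul hp (by positivity)) (by positivity)
      _ ≤ exp (p * ((a ^ 2)⁻¹) ^ 2) * gammaProfile p r := by
          gcongr
          exact (div_pos (exp_pos _) (by positivity)).le

end ProfileIntegrals

lemma PM_eq_integral_cauchyProfile {n : ℕ} (hn : 1 ≤ n) {a b : ℝ} (ha : 0 < a) (hab : a ≤ b) :
    PM n a b = 1 / √π * (Gamma (((n : ℝ) + 1) / 2) / Gamma ((n : ℝ) / 2)) *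
      (2 * ∫ r in a..b, cauchyProfile (((n : ℝ) + 1) / 2) r) := by
  have : Nontrivial (EuclideanSpace ℝ (Fin n)) :=
    Module.nontrivial_of_finrank_pos (R := ℝ) (by rw [finrank_euclideanSpace_fin]; exact hn)
  have hprofile : ∫ r in a..b, r ^ (n - 1) * (Gamma (((n : ℝ) + 1) / 2) /
        π ^ (((n : ℝ) + 1) / 2) * (1 + r ^ 2) ^ (-(((n : ℝ) + 1) / 2))) =
      Gamma (((n : ℝ) + 1) / 2) / π ^ (((n : ℝ) + 1) / 2) *
        ∫ r in a..b, cauchyProfile (((n : ℝ) + 1) / 2) r := by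
    rw [← intervalIntegral.integral_const_mul]
    refine intervalIntegral.integral_congr fun r hr => ?_
    rw [← pow_mul_one_add_sq_rpow_eq_cauchyProfile hn
      (ha.trans_le (uIcc_of_le hab ▸ hr).1)]
    ring
  have hπ : π ^ (((n : ℝ) + 1) / 2) = √π ^ (n + 1) := by
    rw [rpow_div_two_eq_sqrt _ pi_pos.le, ← rpow_natCast]
    push_cast
    rfl
  rw [PM]
  unfold pC
  rw [setIntegral_annulus_fun_norm volume
      (fun r => Gamma (((n : ℝ) + 1) / 2) / π ^ (((n : ℝ) + 1) / 2) *
        (1 + r ^ 2) ^ (-(((n : ℝ) + 1) / 2))) ha hab,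
    finrank_euclideanSpace_fin, natCast_mul_volume_real_ball_zero_one hn]
  simp only [smul_eq_mul]
  rw [hprofile, hπ]
  field_simp
  ring

lemma PM_div_eq_integral_cauchyProfile_div {n : ℕ} (hn : 1 ≤ n) {a b : ℝ} (ha : 0 < a)
    (hab : a ≤ b) :
    PM n a b / ((1 / √π) * (Gamma (((n : ℝ) + 1) / 2) / Gamma ((n : ℝ) / 2)) *
        √(2 / ((n : ℝ) + 1)) *
        ∫ t in (((n : ℝ) + 1) / (2 * b ^ 2))..(((n : ℝ) + 1) / (2 * a ^ 2)),
          t ^ (-(1 : ℝ) / 2) * exp (-t)) =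
      (∫ r in a..b, cauchyProfile (((n : ℝ) + 1) / 2) r) /
        ∫ r in a..b, gammaProfile (((n : ℝ) + 1) / 2) r := by
  have hp : 0 < ((n : ℝ) + 1) / 2 := by positivity
  have hC : 1 / √π * (Gamma (((n : ℝ) + 1) / 2) / Gamma ((n : ℝ) / 2)) ≠ 0 := by
    have := Gamma_pos_of_pos hp
    have := Gamma_pos_of_pos (by positivity : (0 : ℝ) < (n : ℝ) / 2)
    positivity
  have hsqrt : √(2 / ((n : ℝ) + 1)) * (2 * √(((n : ℝ) + 1) / 2)) = 2 := by
    rw [mul_left_comm, ← sqrt_mul (by positivity), div_mul_div_cancel₀ (by positivity),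
      div_self two_ne_zero, sqrt_one, mul_one]
  rw [div_mul_eq_div_div _ 2 (b ^ 2), div_mul_eq_div_div _ 2 (a ^ 2),
    integral_rpow_neg_half_mul_exp_neg hp ha hab, PM_eq_integral_cauchyProfile hn ha hab,
    mul_assoc _ √_, ← mul_assoc √_, hsqrt, mul_div_mul_left _ _ hC,
    mul_div_mul_left _ _ two_ne_zero]

theorem miss_prob_incomplete_gamma_equivalence_general
    (ξ : ℝ) (hξ : 0 < ξ) (η : ℕ → ℝ)
    (hregime : Tendsto (fun n : ℕ => (η n / etaMax ξ n) ^ (2 / ((n : ℝ) + 1)))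
      atTop (nhds 1))
    (r₁ r₂ : ℕ → ℝ)
    (hsol : ∀ᶠ n : ℕ in atTop, 0 < r₁ n ∧ r₁ n < r₂ n ∧
      ell ξ n (r₁ n) = η n ∧ ell ξ n (r₂ n) = η n) :
    Tendsto (fun n : ℕ => PM n (r₁ n) (r₂ n) /
        ((1 / Real.sqrt π) * (Real.Gamma (((n : ℝ) + 1) / 2) / Real.Gamma ((n : ℝ) / 2)) *
          Real.sqrt (2 / ((n : ℝ) + 1)) *
          ∫ t in (((n : ℝ) + 1) / (2 * (r₂ n) ^ 2))..(((n : ℝ) + 1) / (2 * (r₁ n) ^ 2)),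
            t ^ (-(1 : ℝ) / 2) * Real.exp (-t)))
      atTop (nhds 1) := by
  have hgrowth : ∀ᶠ n : ℕ in atTop, ξ ^ 2 / 8 * ((n : ℝ) + 1) < 1 + r₁ n ^ 2 :=
    eventually_lt_one_add_sq_of_tendsto hξ <|
      hregime.congr' <| hsol.mono fun n h => by simp only [h.2.2.1]
  have hupper : Tendsto (fun n : ℕ => exp (((n : ℝ) + 1) / 2 * ((r₁ n ^ 2)⁻¹) ^ 2)) atTop
      (nhds 1) := by
    simpa only [exp_zero] using
      (tendsto_mul_inv_sq_sq_of_linear_lt (by positivity) hgrowth).rexp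
  have hbounds := ((eventually_ge_atTop 1).and hsol).mono fun n ⟨hn, hr₁, hr₁₂, _⟩ =>
    PM_div_eq_integral_cauchyProfile_div hn hr₁ hr₁₂.le ▸
      integral_cauchyProfile_div_integral_gammaProfile_mem_Icc (by positivity) hr₁ hr₁₂
  exact tendsto_of_tendsto_of_tendsto_of_le_of_le' tendsto_const_nhds hupper
    (hbounds.mono fun _ h => h.1) (hbounds.mono fun _ h => h.2)

/-- Under regime (R-i) (`(η_n/η_max(n))^{2/(n+1)} → 1`) the miss probability
is asymptotically equivalent to
`(1/√π)·(Γ((n+1)/2)/Γ(n/2))·√(2/(n+1))·∫_{(n+1)/(2r₂²)}^{(n+1)/(2r₁²)} t^{-1/2} e^{-t} dt`. -/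
theorem miss_prob_incomplete_gamma_equivalence
    (ξ : ℝ) (hξ : 0 < ξ) (η : ℕ → ℝ)
    (hrange : ∀ᶠ n : ℕ in atTop, eta0 ξ n < η n ∧ η n < etaMax ξ n)
    (hregime : Tendsto (fun n : ℕ => (η n / etaMax ξ n) ^ (2 / ((n : ℝ) + 1)))
      atTop (nhds 1))
    (r₁ r₂ : ℕ → ℝ)
    (hsol : ∀ᶠ n : ℕ in atTop, 0 < r₁ n ∧ r₁ n < r₂ n ∧
      ell ξ n (r₁ n) = η n ∧ ell ξ n (r₂ n) = η n) :
    Tendsto (fun n : ℕ => PM n (r₁ n) (r₂ n) /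
        ((1 / Real.sqrt π) * (Real.Gamma (((n : ℝ) + 1) / 2) / Real.Gamma ((n : ℝ) / 2)) *
          Real.sqrt (2 / ((n : ℝ) + 1)) *
          ∫ t in (((n : ℝ) + 1) / (2 * (r₂ n) ^ 2))..(((n : ℝ) + 1) / (2 * (r₁ n) ^ 2)),
            t ^ (-(1 : ℝ) / 2) * Real.exp (-t)))
      atTop (nhds 1) :=
  miss_prob_incomplete_gamma_equivalence_general ξ hξ η hregime r₁ r₂ hsol
end
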